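/- Let θ > 0 and n ≥ 2. The function Φ(d₁,…,d_{n-1}) = ∑_{i=1}^{n-1} d_i/(e^{2θd_i} - 1), on the simplex {d_i > 0 : ∑d_i = 1}, is minimized at the equispaced point d_i = 1/(n-1) for all i. -/

import Mathlib

open Real Set Finset

private lemma key_ineq (t : ℝ) (ht : 0 ≤ t) : 2 * (Real.exp t - 1) ≤ t * (Real.exp t + 1) := by
  have hderiv : ∀ x : ℝ, HasDerivAt (fun x : ℝ => x * Real.exp x + x - 2 * Real.exp x + 2)
      (x * Real.exp x - Real.exp x + 1) x := by
    intro x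
    have h1 : HasDerivAt (fun x : ℝ => x * Real.exp x) (1 * Real.exp x + x * Real.exp x) x :=
      (hasDerivAt_id x).mul (Real.hasDerivAt_exp x)
    have h2 := ((h1.add (hasDerivAt_id x)).sub ((Real.hasDerivAt_exp x).const_mul 2)).add_const 2
    exact h2.congr_deriv (by ring)
  have hmono : MonotoneOn (fun x : ℝ => x * Real.exp x + x - 2 * Real.exp x + 2) (Ici 0) := by
    apply monotoneOn_of_deriv_nonneg (convex_Ici 0)
    · fun_prop
    · intro x hx
      exact (hderiv x).differentiableAt.differentiableWithinAt
    · intro x hx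
      rw [(hderiv x).deriv]
      have hex : 0 < Real.exp x := Real.exp_pos x
      have h3 : (1 - x) * Real.exp x ≤ 1 := by
        have h4 := mul_le_mul_of_nonneg_right (Real.add_one_le_exp (-x)) hex.le
        calc (1 - x) * Real.exp x = (-x + 1) * Real.exp x := by ring
          _ ≤ Real.exp (-x) * Real.exp x := h4
          _ = 1 := by rw [← Real.exp_add]; simp
      nlinarith
  have h5 := hmono (self_mem_Ici) (mem_Ici.mpr ht) ht
  simp only [Real.exp_zero] at h5
  nlinarith [h5]

private lemma phi_convexOn (a : ℝ) (ha : 0 < a) :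
    ConvexOn ℝ (Ioi 0) (fun x : ℝ => x / (Real.exp (a * x) - 1)) := by
  have hden : ∀ x : ℝ, 0 < x → 0 < Real.exp (a * x) - 1 := by
    intro x hx
    have h0 : (0:ℝ) < a * x := mul_pos ha hx
    nlinarith [Real.add_one_le_exp (a * x)]
  have hE : ∀ x : ℝ, HasDerivAt (fun x => Real.exp (a * x)) (Real.exp (a * x) * a) x := by
    intro x
    have := (Real.hasDerivAt_exp (a * x)).comp x ((hasDerivAt_id x).const_mul a)
    exact this.congr_deriv (by ring)
  -- first derivative
  have hphi : ∀ x : ℝ, 0 < x → HasDerivAt (fun x => x / (Real.exp (a * x) - 1))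
      ((1 * (Real.exp (a * x) - 1) - x * (Real.exp (a * x) * a)) / (Real.exp (a * x) - 1) ^ 2)
      x := by
    intro x hx
    exact (hasDerivAt_id x).div ((hE x).sub_const 1) (ne_of_gt (hden x hx))
  -- second derivative of the quotient N/D
  set N : ℝ → ℝ := fun x => 1 * (Real.exp (a * x) - 1) - x * (Real.exp (a * x) * a) with hNdef
  set D : ℝ → ℝ := fun x => (Real.exp (a * x) - 1) ^ 2 with hDdef
  have hN' : ∀ x : ℝ, HasDerivAt N
      (1 * (Real.exp (a * x) * a) - (1 * (Real.exp (a * x) * a) + x * (Real.exp (a * x) * a * a)))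
      x := by
    intro x
    exact (((hE x).sub_const 1).const_mul 1).sub ((hasDerivAt_id x).mul ((hE x).mul_const a))
  have hD' : ∀ x : ℝ, HasDerivAt D
      ((2 : ℝ) * (Real.exp (a * x) - 1) ^ 1 * (Real.exp (a * x) * a)) x := by
    intro x
    exact ((hE x).sub_const 1).pow 2
  have hP : ∀ x : ℝ, 0 < x → HasDerivAt (fun y => N y / D y)
      (((1 * (Real.exp (a * x) * a) -
          (1 * (Real.exp (a * x) * a) + x * (Real.exp (a * x) * a * a))) * D x -
        N x * ((2 : ℝ) * (Real.exp (a * x) - 1) ^ 1 * (Real.exp (a * x) * a))) / D x ^ 2) x := by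
    intro x hx
    refine (hN' x).div (hD' x) (ne_of_gt ?_)
    have h1 := hden x hx
    simp only [hDdef]
    positivity
  have hev : ∀ x ∈ Ioi (0:ℝ), deriv (fun x => x / (Real.exp (a * x) - 1)) =ᶠ[nhds x]
      (fun y => N y / D y) := by
    intro x hx
    filter_upwards [isOpen_Ioi.mem_nhds hx] with y hy
    exact (hphi y hy).deriv
  apply convexOn_of_deriv2_nonneg (convex_Ioi 0)
  · apply ContinuousOn.div continuousOn_id (by fun_prop)
    intro x hx
    exact ne_of_gt (hden x hx)
  · intro x hx
    rw [interior_Ioi] at hx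
    exact (hphi x hx).differentiableAt.differentiableWithinAt
  · intro x hx
    rw [interior_Ioi] at hx
    exact ((hP x hx).differentiableAt.congr_of_eventuallyEq (hev x hx)).differentiableWithinAt
  · intro x hx
    rw [interior_Ioi] at hx
    have h2 : deriv^[2] (fun x => x / (Real.exp (a * x) - 1)) x
        = deriv (fun y => N y / D y) x := by
      simp only [Function.iterate_succ, Function.iterate_zero, Function.comp_apply, id]
      exact (hev x hx).deriv_eq
    rw [h2, (hP x hx).deriv]
    set E := Real.exp (a * x) with hEdef
    have hE1 : 0 < E - 1 := hden x hx
    have hEpos : 0 < E := Real.exp_pos _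
    have hkey : 2 * (E - 1) ≤ a * x * (E + 1) := by
      have := key_ineq (a * x) (le_of_lt (mul_pos ha hx))
      rwa [hEdef]
    apply div_nonneg _ (by positivity)
    have hfact : (1 * (E * a) - (1 * (E * a) + x * (E * a * a))) * D x -
        N x * ((2 : ℝ) * (E - 1) ^ 1 * (E * a))
        = (E - 1) * (E * a) * (a * x * (E + 1) - 2 * (E - 1)) := by
      simp only [hNdef, hDdef, ← hEdef]
      ring
    rw [hfact]
    have : 0 ≤ a * x * (E + 1) - 2 * (E - 1) := by linarith
    positivity

theorem IMSPE_sum_min_equispaced (θ : ℝ) (hθ : 0 < θ) (n : ℕ) (hn : 2 ≤ n)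
    (d : Fin (n - 1) → ℝ) (hd : ∀ i, 0 < d i) (hsum : ∑ i, d i = 1) :
    ∑ i : Fin (n - 1), (1 / (n - 1 : ℝ)) / (exp (2 * θ * (1 / (n - 1 : ℝ))) - 1) ≤
      ∑ i, d i / (exp (2 * θ * d i) - 1) := by
  have ha : (0:ℝ) < 2 * θ := by linarith
  have hconv := phi_convexOn (2 * θ) ha
  have hm : (1:ℝ) ≤ (n:ℝ) - 1 := by
    have : (2:ℝ) ≤ (n:ℝ) := by exact_mod_cast hn
    linarith
  have hmpos : (0:ℝ) < (n:ℝ) - 1 := by linarith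
  have hcard : ((Finset.univ : Finset (Fin (n - 1))).card : ℝ) = (n:ℝ) - 1 := by
    simp [Nat.cast_sub (by omega : 1 ≤ n)]
  have hw : ∑ _i : Fin (n - 1), (1 / ((n:ℝ) - 1)) = 1 := by
    rw [Finset.sum_const, nsmul_eq_mul, ← hcard]
    field_simp
    rw [hcard, div_self (ne_of_gt hmpos)]
  have hjensen := hconv.map_sum_le (t := Finset.univ) (w := fun _ : Fin (n - 1) => 1 / ((n:ℝ) - 1))
    (p := d) (fun i _ => by positivity) hw (fun i _ => hd i)
  have hmean : ∑ i : Fin (n - 1), (1 / ((n:ℝ) - 1)) • d i = 1 / ((n:ℝ) - 1) := by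
    simp only [smul_eq_mul, ← Finset.mul_sum, hsum, mul_one]
  rw [hmean] at hjensen
  simp only [smul_eq_mul] at hjensen
  rw [← Finset.mul_sum] at hjensen
  rw [Finset.sum_const, nsmul_eq_mul, hcard]
  calc ((n:ℝ) - 1) * ((1 / ((n:ℝ) - 1)) / (Real.exp (2 * θ * (1 / ((n:ℝ) - 1))) - 1))
      ≤ ((n:ℝ) - 1) * (1 / ((n:ℝ) - 1) * ∑ i, d i / (Real.exp (2 * θ * d i) - 1)) := by
        apply mul_le_mul_of_nonneg_left hjensen (le_of_lt hmpos)
    _ = ∑ i, d i / (Real.exp (2 * θ * d i) - 1) := by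
        field_simp
        refine Finset.sum_congr rfl fun x _ => ?_
        ring_nf
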